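/- Let α > −1 and let j₁ > j₂ ≥ 0 be real numbers. Then ∫_{tr(j₁,j₂)} ‖x‖^{2α} dx = (1/(2α+2)) ∫_{arctan(j₂/j₁)}^{π/4} [ (j₁/cos θ)^{2α+2} − (j₂/sin θ)^{2α+2} ] dθ. -/

import Mathlib

open MeasureTheory Filter Set Real

noncomputable section

abbrev E2 : Type := EuclideanSpace ℝ (Fin 2)

/-- The triangle `tr(a,b) = {(x₁,x₂) : b ≤ x₁ ≤ a, b ≤ x₂ ≤ x₁}`. -/
def tri (a b : ℝ) : Set E2 :=
  {x : E2 | b ≤ x 0 ∧ x 0 ≤ a ∧ b ≤ x 1 ∧ x 1 ≤ x 0}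

/-!
Identify `ℝ²` isometrically with `ℂ` and pass to polar coordinates `(r, θ)`. The ray at angle `θ`
leaves the line `x₂ = j₂` at `r = j₂ / sin θ` and reaches the line `x₁ = j₁` at `r = j₁ / cos θ`;
it meets the triangle exactly for `θ` between the angle `arctan (j₂ / j₁)` of the vertex `(j₁, j₂)`
and the angle `π / 4` of the diagonal. The integrand becomes `r ^ (2α) · r`, whose radial
integral between these bounds is `(hi ^ (2α+2) - lo ^ (2α+2)) / (2α+2)`, and Fubini finishes.
-/

section Fiberwise

variable {α β E : Type*} [MeasurableSpace α] [MeasurableSpace β] {μ : Measure α} {ν : Measure β}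
  [SFinite μ] [SFinite ν] [NormedAddCommGroup E] [NormedSpace ℝ E]

theorem setIntegral_prod_eq_setIntegral_fiber {s : Set β} {t : β → Set α} {f : α × β → E}
    (hA : MeasurableSet {p : α × β | p.2 ∈ s ∧ p.1 ∈ t p.2}) (hs : MeasurableSet s)
    (hf : IntegrableOn f {p : α × β | p.2 ∈ s ∧ p.1 ∈ t p.2} (μ.prod ν)) :
    ∫ p in {p : α × β | p.2 ∈ s ∧ p.1 ∈ t p.2}, f p ∂(μ.prod ν) =
      ∫ y in s, ∫ x in t y, f (x, y) ∂μ ∂ν := by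
  classical
  set A := {p : α × β | p.2 ∈ s ∧ p.1 ∈ t p.2}
  have fiber : ∀ y, ∫ x, A.indicator f (x, y) ∂μ =
      s.indicator (fun y => ∫ x in t y, f (x, y) ∂μ) y := by
    intro y
    by_cases hy : y ∈ s
    · have ht : MeasurableSet (t y) := by
        simpa [A, hy] using (measurable_prodMk_right hA : MeasurableSet ((·, y) ⁻¹' A))
      rw [indicator_of_mem hy, ← integral_indicator ht]
      congr 1
      ext x
      have hx : (x, y) ∈ A ↔ x ∈ t y := ⟨And.right, And.intro hy⟩
      simp only [indicator_apply, hx]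
    · simp [A, indicator, hy]
  rw [← integral_indicator hA, integral_prod_symm _ ((integrable_indicator_iff hA).2 hf),
    ← integral_indicator hs]
  simp_rw [fiber]

end Fiberwise

theorem integrableOn_rpow_fst_Ioc_prod {s : ℝ} (hs : -1 < s) (c : ℝ) {t : Set ℝ}
    (ht : volume t ≠ ⊤) : IntegrableOn (fun p : ℝ × ℝ => p.1 ^ s) (Ioc 0 c ×ˢ t) := by
  have : IsFiniteMeasure (volume.restrict t) := isFiniteMeasure_restrict.2 ht
  rw [IntegrableOn, Measure.volume_eq_prod, ← Measure.prod_restrict]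
  exact (intervalIntegral.intervalIntegrable_rpow' hs).1.comp_fst _

theorem integral_rpow_Ioc_inter_Ici {s lo hi : ℝ} (hs : -1 < s) (hlo : 0 ≤ lo) (hle : lo ≤ hi) :
    ∫ r in Ioc 0 hi ∩ Ici lo, r ^ s = (hi ^ (s + 1) - lo ^ (s + 1)) / (s + 1) := by
  rw [← integral_rpow (Or.inl hs), intervalIntegral.integral_of_le hle]
  rcases hlo.eq_or_lt with rfl | hlo
  · rw [show Ioc 0 hi ∩ Ici 0 = Ioc 0 hi from inter_eq_left.2 fun r hr => hr.1.le]
  · rw [← integral_Icc_eq_integral_Ioc, show Ioc 0 hi ∩ Ici lo = Icc lo hi from ?_]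
    ext r
    simp only [mem_inter_iff, mem_Ioc, mem_Ici, mem_Icc]
    constructor
    · exact fun h => ⟨h.2, h.1.2⟩
    · exact fun h => ⟨⟨hlo.trans_le h.1, h.2⟩, h.1⟩

theorem Complex.measurable_polarCoord_symm : Measurable Complex.polarCoord.symm :=
  measurableEquivRealProd.symm.measurable.comp continuous_polarCoord_symm.measurable

theorem Complex.setIntegral_comp_polarCoord_symm {E : Type*} [NormedAddCommGroup E]
    [NormedSpace ℝ E] (f : ℂ → E) {s : Set ℂ} (hs : MeasurableSet s) :
    ∫ p in polarCoord.target ∩ Complex.polarCoord.symm ⁻¹' s,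
      p.1 • f (Complex.polarCoord.symm p) = ∫ z in s, f z := by
  rw [← integral_indicator hs, ← Complex.integral_comp_polarCoord_symm,
    ← setIntegral_indicator (hs.preimage Complex.measurable_polarCoord_symm)]
  congr 1
  ext p
  classical
  simp only [indicator_apply, mem_preimage]
  split_ifs <;> simp

theorem Real.sin_le_cos_iff {θ : ℝ} (h₁ : -(3 * π / 4) ≤ θ) (h₂ : θ < 5 * π / 4) :
    sin θ ≤ cos θ ↔ θ ≤ π / 4 := by
  have key : sin (θ - π / 4) = √2 / 2 * (sin θ - cos θ) := by
    rw [sin_sub, cos_pi_div_four, sin_pi_div_four]; ring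
  have h2 : 0 < √2 / 2 := by positivity
  constructor
  · intro h
    by_contra! hθ
    have := sin_pos_of_pos_of_lt_pi (x := θ - π / 4) (by linarith) (by linarith)
    nlinarith
  · intro hθ
    have := sin_nonpos_of_nonpos_of_neg_pi_le (x := θ - π / 4) (by linarith) (by linarith)
    nlinarith

theorem Real.arctan_div_le_iff {a b θ : ℝ} (hb : 0 < b) (hθ₁ : -(π / 2) < θ) (hθ₂ : θ < π / 2) :
    arctan (a / b) ≤ θ ↔ a * cos θ ≤ b * sin θ := by
  have hcos : 0 < cos θ := cos_pos_of_mem_Ioo ⟨hθ₁, hθ₂⟩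
  rw [← arctan_tan hθ₁ hθ₂, arctan_le_arctan_iff, arctan_tan hθ₁ hθ₂, tan_eq_sin_div_cos,
    div_le_div_iff₀ hb hcos, mul_comm (sin θ)]

theorem measurableSet_tri (a b : ℝ) : MeasurableSet (tri a b) := by
  unfold tri; measurability

/-- `0 < r` is the constraint of `polarCoord.target`. At `θ = 0`, which occurs only for `j₂ = 0`,
the lower bound is `j₂ / sin θ = 0 / 0 = 0`. -/
def polarTri (j₁ j₂ : ℝ) : Set (ℝ × ℝ) :=
  {p | p.2 ∈ Icc (arctan (j₂ / j₁)) (π / 4) ∧ p.1 ∈ Ioc 0 (j₁ / cos p.2) ∩ Ici (j₂ / sin p.2)}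

theorem polarCoord_target_inter_preimage_tri {j₁ j₂ : ℝ} (hj₂ : 0 ≤ j₂) (hj₁ : 0 < j₁) :
    polarCoord.target ∩
        Complex.polarCoord.symm ⁻¹' (Complex.orthonormalBasisOneI.repr ⁻¹' tri j₁ j₂) =
      polarTri j₁ j₂ := by
  ext ⟨r, θ⟩
  suffices (0 < r ∧ -π < θ ∧ θ < π) ∧ j₂ ≤ r * cos θ ∧ r * cos θ ≤ j₁ ∧ j₂ ≤ r * sin θ ∧
      r * sin θ ≤ r * cos θ ↔
      (arctan (j₂ / j₁) ≤ θ ∧ θ ≤ π / 4) ∧ (0 < r ∧ r ≤ j₁ / cos θ) ∧ j₂ / sin θ ≤ r by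
    simpa [polarTri, tri, polarCoord_target, ← Complex.ofReal_cos, ← Complex.ofReal_sin]
  have hπ := pi_pos
  constructor
  · rintro ⟨⟨hr, hθ₁, hθ₂⟩, -, hx, hy, hyx⟩
    have hsin : 0 ≤ sin θ := nonneg_of_mul_nonneg_right (hj₂.trans hy) hr
    have hθ : 0 ≤ θ := by
      by_contra! h
      exact (sin_neg_of_neg_of_neg_pi_lt h hθ₁).not_ge hsin
    have hθ4 : θ ≤ π / 4 :=
      (sin_le_cos_iff (by linarith) (by linarith)).1 (le_of_mul_le_mul_left hyx hr)
    have hcos : 0 < cos θ := cos_pos_of_mem_Ioo ⟨by linarith, by linarith⟩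
    have hcross : j₂ * cos θ ≤ j₁ * sin θ := by
      nlinarith [mul_le_mul_of_nonneg_right hy hcos.le, mul_le_mul_of_nonneg_right hx hsin]
    exact ⟨⟨(arctan_div_le_iff hj₁ (by linarith) (by linarith)).2 hcross, hθ4⟩,
      ⟨hr, (le_div_iff₀ hcos).2 hx⟩, div_le_of_le_mul₀ hsin hr.le hy⟩
  · rintro ⟨⟨hθ₀, hθ4⟩, ⟨hr, hx⟩, hy⟩
    have hθ : 0 ≤ θ := (arctan_nonneg.2 (div_nonneg hj₂ hj₁.le)).trans hθ₀
    have hcos : 0 < cos θ := cos_pos_of_mem_Ioo ⟨by linarith, by linarith⟩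
    have hsin : 0 ≤ sin θ := sin_nonneg_of_nonneg_of_le_pi hθ (by linarith)
    have hsc : sin θ ≤ cos θ := (sin_le_cos_iff (by linarith) (by linarith)).2 hθ4
    have hcross : j₂ * cos θ ≤ j₁ * sin θ :=
      (arctan_div_le_iff hj₁ (by linarith) (by linarith)).1 hθ₀
    have hy' : j₂ ≤ r * sin θ := by
      rcases hsin.eq_or_lt with hsin0 | hsin0
      · rw [← hsin0] at hcross ⊢
        nlinarith
      · exact (div_le_iff₀ hsin0).1 hy
    have hyx := mul_le_mul_of_nonneg_left hsc hr.le
    exact ⟨⟨hr, by linarith, by linarith⟩, hy'.trans hyx, (le_div_iff₀ hcos).1 hx, hy',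
      hyx⟩

theorem measurableSet_polarTri {j₁ j₂ : ℝ} (hj₂ : 0 ≤ j₂) (hj₁ : 0 < j₁) :
    MeasurableSet (polarTri j₁ j₂) :=
  polarCoord_target_inter_preimage_tri hj₂ hj₁ ▸ polarCoord.open_target.measurableSet.inter
    (((measurableSet_tri j₁ j₂).preimage
      Complex.orthonormalBasisOneI.repr.continuous.measurable).preimage
        Complex.measurable_polarCoord_symm)

theorem setIntegral_tri_eq_setIntegral_polarTri (s : ℝ) {j₁ j₂ : ℝ} (hj₂ : 0 ≤ j₂)
    (hj₁ : 0 < j₁) :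
    ∫ x in tri j₁ j₂, ‖x‖ ^ s = ∫ p in polarTri j₁ j₂, p.1 ^ (s + 1) := by
  set e := Complex.orthonormalBasisOneI.repr
  have htri : MeasurableSet (e ⁻¹' tri j₁ j₂) :=
    (measurableSet_tri j₁ j₂).preimage e.continuous.measurable
  calc ∫ x in tri j₁ j₂, ‖x‖ ^ s = ∫ z in e ⁻¹' tri j₁ j₂, ‖z‖ ^ s := by
        simp_rw [← e.measurePreserving.setIntegral_preimage_emb
          e.toHomeomorph.measurableEmbedding, LinearIsometryEquiv.norm_map]
    _ = ∫ p in polarTri j₁ j₂, p.1 • ‖Complex.polarCoord.symm p‖ ^ s := by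
        rw [← polarCoord_target_inter_preimage_tri hj₂ hj₁,
          Complex.setIntegral_comp_polarCoord_symm (‖·‖ ^ s) htri]
    _ = ∫ p in polarTri j₁ j₂, p.1 ^ (s + 1) :=
        setIntegral_congr_fun (measurableSet_polarTri hj₂ hj₁) fun p hp => by
          rw [Complex.norm_polarCoord_symm, abs_of_pos hp.2.1.1, smul_eq_mul,
            rpow_add_one hp.2.1.1.ne', mul_comm]

theorem integrableOn_rpow_fst_polarTri {s : ℝ} (hs : -1 < s) {j₁ j₂ : ℝ} (hj₂ : 0 ≤ j₂)
    (hj₁ : 0 < j₁) : IntegrableOn (fun p : ℝ × ℝ => p.1 ^ s) (polarTri j₁ j₂) := by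
  refine (integrableOn_rpow_fst_Ioc_prod hs (j₁ / cos (π / 4))
    (measure_Icc_lt_top (a := arctan (j₂ / j₁)) (b := π / 4)).ne).mono_set ?_
  rintro ⟨r, θ⟩ ⟨⟨hθ₀, hθ4⟩, ⟨hr, hx⟩, -⟩
  have hθ : 0 ≤ θ := (arctan_nonneg.2 (div_nonneg hj₂ hj₁.le)).trans hθ₀
  have hcos_le : cos (π / 4) ≤ cos θ := cos_le_cos_of_nonneg_of_le_pi hθ (by linarith [pi_pos]) hθ4
  have hcos : 0 < cos (π / 4) := by rw [cos_pi_div_four]; positivity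
  exact ⟨⟨hr, hx.trans (div_le_div_of_nonneg_left hj₁.le hcos hcos_le)⟩, hθ₀, hθ4⟩

theorem div_sin_mem_Icc_zero_div_cos {j₁ j₂ θ : ℝ} (hj₂ : 0 ≤ j₂) (hj₁ : 0 < j₁)
    (hθ : θ ∈ Icc (arctan (j₂ / j₁)) (π / 4)) : j₂ / sin θ ∈ Icc 0 (j₁ / cos θ) := by
  have hπ := pi_pos
  have hθ₀ : 0 ≤ θ := (arctan_nonneg.2 (div_nonneg hj₂ hj₁.le)).trans hθ.1
  have hcos : 0 < cos θ := cos_pos_of_mem_Ioo ⟨by linarith, by linarith [hθ.2]⟩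
  have hsin : 0 ≤ sin θ := sin_nonneg_of_nonneg_of_le_pi hθ₀ (by linarith [hθ.2])
  refine ⟨div_nonneg hj₂ hsin, ?_⟩
  rcases hsin.eq_or_lt with hsin0 | hsin0
  · rw [← hsin0, div_zero]
    exact (div_pos hj₁ hcos).le
  · rw [div_le_div_iff₀ hsin0 hcos]
    exact (arctan_div_le_iff hj₁ (by linarith) (by linarith [hθ.2])).1 hθ.1

theorem stmt14 (α : ℝ) (hα : -1 < α) (j₁ j₂ : ℝ) (hj₂ : 0 ≤ j₂) (hj : j₂ < j₁) :
    (∫ x in tri j₁ j₂, ‖x‖ ^ (2 * α)) =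
      (1 / (2 * α + 2)) * ∫ θ in Real.arctan (j₂ / j₁)..(π / 4),
        ((j₁ / Real.cos θ) ^ (2 * α + 2) - (j₂ / Real.sin θ) ^ (2 * α + 2)) := by
  have hj₁ : 0 < j₁ := hj₂.trans_lt hj
  have hs : -1 < 2 * α + 1 := by linarith
  have hθ₀ : arctan (j₂ / j₁) ≤ π / 4 :=
    arctan_one ▸ arctan_le_arctan_iff.2 ((div_le_one hj₁).2 hj.le)
  calc (∫ x in tri j₁ j₂, ‖x‖ ^ (2 * α)) = ∫ p in polarTri j₁ j₂, p.1 ^ (2 * α + 1) :=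
        setIntegral_tri_eq_setIntegral_polarTri _ hj₂ hj₁
    _ = ∫ θ in Icc (arctan (j₂ / j₁)) (π / 4),
          ∫ r in Ioc 0 (j₁ / cos θ) ∩ Ici (j₂ / sin θ), r ^ (2 * α + 1) := by
        rw [Measure.volume_eq_prod]
        exact setIntegral_prod_eq_setIntegral_fiber (s := Icc (arctan (j₂ / j₁)) (π / 4))
          (t := fun θ => Ioc 0 (j₁ / cos θ) ∩ Ici (j₂ / sin θ)) (measurableSet_polarTri hj₂ hj₁)
          measurableSet_Icc (integrableOn_rpow_fst_polarTri hs hj₂ hj₁)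
    _ = ∫ θ in Icc (arctan (j₂ / j₁)) (π / 4),
          1 / (2 * α + 2) * ((j₁ / cos θ) ^ (2 * α + 2) - (j₂ / sin θ) ^ (2 * α + 2)) :=
        setIntegral_congr_fun measurableSet_Icc fun θ hθ => by
          obtain ⟨hlo, hle⟩ := div_sin_mem_Icc_zero_div_cos hj₂ hj₁ hθ
          rw [integral_rpow_Ioc_inter_Ici hs hlo hle, show 2 * α + 1 + 1 = 2 * α + 2 by ring,
            one_div_mul_eq_div]
    _ = _ := by
        rw [integral_Icc_eq_integral_Ioc, ← intervalIntegral.integral_of_le hθ₀,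
          intervalIntegral.integral_const_mul]
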